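/- arXiv:1412.4524 — 2 statements merged into one kernel-verified Lean document; each statement's English description precedes it below -/
import Mathlib

section
/- Let φ be an endomorphism of a group Π and let m divide n. Then the boosting function ι_{m,n} : R[φ^m] → R[φⁿ] sending the class of α to the class of α φ^m(α) φ^{2m}(α) ⋯ φ^{n-m}(α) is well-defined, i.e., independent of the choice of representative of the Reidemeister class. -/
variable {G : Type*} [Group G]

/-- The Reidemeister relation of an endomorphism `φ`: `b` is obtained from `a` by the
Reidemeister action `(γ, a) ↦ γ * a * (φ γ)⁻¹`. -/
def ReidRel (φ : Monoid.End G) (a b : G) : Prop := ∃ γ : G, b = γ * a * (φ γ)⁻¹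

/-- The Reidemeister relation is an equivalence relation. -/
def ReidSetoid (φ : Monoid.End G) : Setoid G where
  r := ReidRel φ
  iseqv := by
    constructor
    · intro x; exact ⟨1, by simp⟩
    · rintro x y ⟨γ, rfl⟩
      exact ⟨γ⁻¹, by simp [mul_assoc]⟩
    · rintro x y z ⟨γ, rfl⟩ ⟨δ, rfl⟩
      exact ⟨δ * γ, by simp [map_mul, mul_assoc]⟩

/-- The inner automorphism `τ_β : x ↦ β x β⁻¹` as a monoid endomorphism. -/
def tauConj (β : G) : Monoid.End G := (MulAut.conj β).toMonoidHom

/-- `β φ(β) φ²(β) ⋯ φ^{n-1}(β)`. -/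
def prodIter (φ : Monoid.End G) (β : G) (n : ℕ) : G :=
  ((List.range n).map (fun i => (φ ^ i) β)).prod

/-- `α φ^m(α) φ^{2m}(α) ⋯ φ^{(k-1)m}(α)` (`k` factors). -/
def boost (φ : Monoid.End G) (m k : ℕ) (α : G) : G :=
  ((List.range k).map (fun i => (φ ^ (i * m)) α)).prod

/-- A Reidemeister class of `φⁿ` is irreducible if it is not in the image of any
boosting map `ι_{m,n}` for a proper divisor `m` of `n`. -/
def IrredClass (φ : Monoid.End G) (n : ℕ) (x : Quotient (ReidSetoid (φ ^ n))) : Prop :=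
  ¬ ∃ m : ℕ, 0 < m ∧ m ∣ n ∧ m < n ∧ ∃ α : G,
      x = Quotient.mk (ReidSetoid (φ ^ n)) (boost φ m (n / m) α)

/-!
Telescoping shows that `β ↦ β ψ(β) ⋯ ψ^{k-1}(β)` carries `γ β ψ(γ)⁻¹` to
`γ (β ψ(β) ⋯ ψ^{k-1}(β)) ψ^k(γ)⁻¹`, so it maps Reidemeister classes of `ψ` to those of `ψ^k`;
`ι_{m,n}` is this map for `ψ = φ^m` and `k = n / m`.
-/

lemma prodIter_succ (ψ : Monoid.End G) (β : G) (k : ℕ) :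
    prodIter ψ β (k + 1) = β * ψ (prodIter ψ β k) := by
  simp only [prodIter, List.range_succ_eq_map, List.map_cons, List.prod_cons, map_list_prod,
    List.map_map, Function.comp_def, Monoid.End.coe_pow, Function.iterate_succ_apply']
  rfl

lemma prodIter_reidAction (ψ : Monoid.End G) (β γ : G) (k : ℕ) :
    prodIter ψ (γ * β * (ψ γ)⁻¹) k = γ * prodIter ψ β k * ((ψ ^ k) γ)⁻¹ := by
  induction k with
  | zero => simp [prodIter]
  | succ k ih =>
    rw [prodIter_succ, prodIter_succ, ih]
    simp only [map_mul, map_inv, Monoid.End.coe_pow, Function.iterate_succ_apply']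
    group

lemma ReidRel.prodIter {ψ : Monoid.End G} {a b : G} (h : ReidRel ψ a b) (k : ℕ) :
    ReidRel (ψ ^ k) (prodIter ψ a k) (prodIter ψ b k) := by
  obtain ⟨γ, rfl⟩ := h
  exact ⟨γ, prodIter_reidAction ψ a γ k⟩

lemma boost_eq_prodIter (φ : Monoid.End G) (m k : ℕ) (α : G) :
    boost φ m k α = prodIter (φ ^ m) α k := by
  simp only [boost, prodIter, ← pow_mul, mul_comm m]

theorem stmt_2_general {G : Type*} [Group G] (φ : Monoid.End G) (m n : ℕ)
    (hmn : m ∣ n) :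
    ∃ ι : Quotient (ReidSetoid (φ ^ m)) → Quotient (ReidSetoid (φ ^ n)),
      ∀ α : G, ι (Quotient.mk (ReidSetoid (φ ^ m)) α) =
        Quotient.mk (ReidSetoid (φ ^ n)) (boost φ m (n / m) α) := by
  have hpow : φ ^ n = (φ ^ m) ^ (n / m) := by rw [← pow_mul, Nat.mul_div_cancel' hmn]
  refine ⟨Quotient.lift (fun α => Quotient.mk (ReidSetoid (φ ^ n)) (boost φ m (n / m) α)) ?_,
    fun α => rfl⟩
  intro a b hab
  apply Quotient.sound
  change ReidRel (φ ^ n) _ _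
  rw [hpow, boost_eq_prodIter, boost_eq_prodIter]
  exact hab.prodIter (n / m)

/-- for `0 < m` and `m ∣ n`, the boosting function
`ι_{m,n} : R[φ^m] → R[φⁿ]`, sending the class of `α` to the class of
`α φ^m(α) φ^{2m}(α) ⋯ φ^{n-m}(α)`, is well defined (independent of representatives). -/
theorem stmt_2 {G : Type*} [Group G] (φ : Monoid.End G) (m n : ℕ)
    (hm : 0 < m) (hmn : m ∣ n) :
    ∃ ι : Quotient (ReidSetoid (φ ^ m)) → Quotient (ReidSetoid (φ ^ n)),
      ∀ α : G, ι (Quotient.mk (ReidSetoid (φ ^ m)) α) =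
        Quotient.mk (ReidSetoid (φ ^ n)) (boost φ m (n / m) α) :=
  stmt_2_general φ m n hmn
end

section
/- Let φ be an endomorphism of a group Π, let β ∈ Π, and let m | n. Then ι_{m,n}(τ_β∘φ) ∘ r_{(βφ(β)⋯φ^{m-1}(β))⁻¹} = r_{(βφ(β)⋯φ^{n-1}(β))⁻¹} ∘ ι_{m,n}(φ) as maps R[φ^m] → R[(τ_β∘φ)ⁿ], where r_g denotes the map on Reidemeister classes induced by right multiplication by g. Consequently, a class [α]ⁿ ∈ R[φⁿ] is irreducible if and only if the corresponding class [α(βφ(β)⋯φ^{n-1}(β))⁻¹]ⁿ ∈ R[(τ_β∘φ)ⁿ] is irreducible. -/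
variable {G : Type*} [Group G]

/-!
Write `c_k = β φ(β) ⋯ φ^{k-1}(β)`. These elements satisfy the cocycle identity
`c_{a+b} = c_a φ^a(c_b)`, which gives `(τ_β ∘ φ)^k = τ_{c_k} ∘ φ^k`. Hence right multiplication
by `c_k⁻¹` carries the Reidemeister action of `φ^k` to that of `(τ_β ∘ φ)^k`, and the cocycle
identity turns the boosted product of `α c_m⁻¹` into that of `α` times `c_{km}⁻¹`. Since
right multiplication is a bijection, the images of all boosting maps correspond, and with them
the irreducible classes.
-/

section

variable (φ : Monoid.End G) (β : G)

lemma tauConj_apply (x : G) : tauConj β x = β * x * β⁻¹ := rfl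

lemma Monoid.End.pow_add_apply (a b : ℕ) (x : G) : (φ ^ (a + b)) x = (φ ^ a) ((φ ^ b) x) := by
  rw [pow_add]; rfl

lemma prodIter_succ_s5 (n : ℕ) : prodIter φ β (n + 1) = prodIter φ β n * (φ ^ n) β := by
  simp [prodIter, List.range_succ]

lemma prodIter_add (a b : ℕ) :
    prodIter φ β (a + b) = prodIter φ β a * (φ ^ a) (prodIter φ β b) := by
  induction b with
  | zero => simp [prodIter]
  | succ b ih =>
    rw [← Nat.add_assoc, prodIter_succ_s5, ih, prodIter_succ_s5, map_mul, mul_assoc,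
      Monoid.End.pow_add_apply]

lemma tauConj_mul_pow_apply (k : ℕ) (x : G) :
    ((tauConj β * φ) ^ k) x = prodIter φ β k * (φ ^ k) x * (prodIter φ β k)⁻¹ := by
  induction k generalizing x with
  | zero => simp [prodIter]
  | succ k ih =>
    simp only [pow_succ, Monoid.End.coe_mul, Function.comp_apply]
    rw [tauConj_apply, ih, prodIter_succ_s5, map_mul, map_mul, map_inv]
    group

lemma reidRel_tauConj_mul_pow_iff (n : ℕ) (a b : G) :
    ReidRel ((tauConj β * φ) ^ n) (a * (prodIter φ β n)⁻¹) (b * (prodIter φ β n)⁻¹) ↔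
      ReidRel (φ ^ n) a b := by
  refine exists_congr fun γ => ?_
  rw [tauConj_mul_pow_apply]
  constructor
  · intro h
    simpa [mul_assoc] using congrArg (· * prodIter φ β n) h
  · rintro rfl
    group

lemma reidClass_mul_inv_eq_iff (n : ℕ) (a b : G) :
    Quotient.mk (ReidSetoid ((tauConj β * φ) ^ n)) (a * (prodIter φ β n)⁻¹) =
        Quotient.mk _ (b * (prodIter φ β n)⁻¹) ↔
      Quotient.mk (ReidSetoid (φ ^ n)) a = Quotient.mk _ b := by
  simp only [Quotient.eq]
  exact reidRel_tauConj_mul_pow_iff φ β n a b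

lemma boost_succ (m k : ℕ) (α : G) :
    boost φ m (k + 1) α = boost φ m k α * (φ ^ (k * m)) α := by
  simp [boost, List.range_succ]

lemma boost_tauConj_mul (m k : ℕ) (α : G) :
    boost (tauConj β * φ) m k (α * (prodIter φ β m)⁻¹) =
      boost φ m k α * (prodIter φ β (k * m))⁻¹ := by
  induction k with
  | zero => simp [boost, prodIter]
  | succ k ih =>
    rw [boost_succ, boost_succ, ih, tauConj_mul_pow_apply, map_mul, map_inv, Nat.succ_mul,
      prodIter_add]
    group

lemma exists_boost_tauConj_mul_iff {m n : ℕ} (hmn : m ∣ n) (a : G) :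
    (∃ α, Quotient.mk (ReidSetoid (φ ^ n)) a = Quotient.mk _ (boost φ m (n / m) α)) ↔
      ∃ α, Quotient.mk (ReidSetoid ((tauConj β * φ) ^ n)) (a * (prodIter φ β n)⁻¹) =
        Quotient.mk _ (boost (tauConj β * φ) m (n / m) α) :=
  (Equiv.mulRight (prodIter φ β m)⁻¹).exists_congr fun α => by
    rw [Equiv.coe_mulRight, boost_tauConj_mul, Nat.div_mul_cancel hmn,
      reidClass_mul_inv_eq_iff]

lemma irredClass_tauConj_mul_iff (n : ℕ) (a : G) :
    IrredClass φ n (Quotient.mk (ReidSetoid (φ ^ n)) a) ↔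
      IrredClass (tauConj β * φ) n
        (Quotient.mk (ReidSetoid ((tauConj β * φ) ^ n)) (a * (prodIter φ β n)⁻¹)) :=
  not_congr <| exists_congr fun _ => and_congr_right fun _ => and_congr_right fun hd =>
    and_congr_right fun _ => exists_boost_tauConj_mul_iff φ β hd a

end

theorem stmt_5_general {G : Type*} [Group G] (φ ψ : Monoid.End G) (β : G)
    (hψ : ψ = tauConj β * φ) (m n : ℕ) (hmn : m ∣ n) :
    (∀ α : G,
      Quotient.mk (ReidSetoid (ψ ^ n)) (boost ψ m (n / m) (α * (prodIter φ β m)⁻¹)) =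
        Quotient.mk (ReidSetoid (ψ ^ n)) (boost φ m (n / m) α * (prodIter φ β n)⁻¹)) ∧
    (∀ α : G,
      IrredClass φ n (Quotient.mk (ReidSetoid (φ ^ n)) α) ↔
        IrredClass ψ n (Quotient.mk (ReidSetoid (ψ ^ n)) (α * (prodIter φ β n)⁻¹))) := by
  subst hψ
  exact ⟨fun α => by rw [boost_tauConj_mul, Nat.div_mul_cancel hmn],
    irredClass_tauConj_mul_iff φ β n⟩

/-- the boosting maps commute with the right-multiplication correspondences
between Reidemeister classes of `φ^k` and of `(τ_β ∘ φ)^k`; consequently a class of `φⁿ`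
is irreducible iff the corresponding class of `(τ_β ∘ φ)ⁿ` is irreducible. -/
theorem stmt_5 {G : Type*} [Group G] (φ ψ : Monoid.End G) (β : G)
    (hψ : ψ = tauConj β * φ) (m n : ℕ) (hm : 0 < m) (hmn : m ∣ n) :
    (∀ α : G,
      Quotient.mk (ReidSetoid (ψ ^ n)) (boost ψ m (n / m) (α * (prodIter φ β m)⁻¹)) =
        Quotient.mk (ReidSetoid (ψ ^ n)) (boost φ m (n / m) α * (prodIter φ β n)⁻¹)) ∧
    (∀ α : G,
      IrredClass φ n (Quotient.mk (ReidSetoid (φ ^ n)) α) ↔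
        IrredClass ψ n (Quotient.mk (ReidSetoid (ψ ^ n)) (α * (prodIter φ β n)⁻¹))) :=
  stmt_5_general φ ψ β hψ m n hmn
end
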